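/- arXiv:quant-ph/0006004 — 5 statements merged into one kernel-verified Lean document; each statement's English description precedes it below -/
import Mathlib

section
/- For every natural number n ≥ 1 and every x ∈ {0,1,...,2^n - 1} with binary digits x = x_{n-1}...x_1 x_0, the Fourier basis state (1/√(2^n)) Σ_{y=0}^{2^n-1} e^{2πi xy/2^n} |y⟩ equals the tensor product of single-qubit states ⊗_{j=0}^{n-1} (1/√2)(|0⟩ + e^{2πi x/2^{j+1}} |1⟩), where the j-th factor has relative phase e^{2πi (0.x_j x_{j-1} ... x_0)}. -/
open scoped BigOperators

lemma sum_bits : ∀ n y, y < 2^n → ∑ k ∈ Finset.range n, (Nat.testBit y k).toNat * 2^k = y := by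
  intro n
  induction n with
  | zero => intro y hy; interval_cases y; simp
  | succ n ih =>
    intro y hy
    rw [Finset.sum_range_succ']
    have h1 : ∀ k, (Nat.testBit y (k+1)).toNat * 2^(k+1) = 2 * ((Nat.testBit (y/2) k).toNat * 2^k) := by
      intro k; rw [Nat.testBit_succ]; ring
    rw [Finset.sum_congr rfl fun k _ => h1 k, ← Finset.mul_sum, ih (y/2) (by omega)]
    have : (Nat.testBit y 0).toNat = y % 2 := by
      rw [Nat.testBit_zero]; rcases Nat.mod_two_eq_zero_or_one y with h | h <;> simp [h]
    simp only [pow_zero, mul_one, this]; omega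


/-- The Fourier basis state `|ψ_x⟩` modulo `2^n` factors as a tensor product of single-qubit
states, stated componentwise: the amplitude of `|ψ_x⟩` at computational basis state `|y⟩`
equals the product over the `n` qubit factors, where the `j`-th factor
`(1/√2)(|0⟩ + e^{2πi x / 2^(j+1)} |1⟩)` acts on the qubit carrying bit `y_{n-1-j}`. -/
theorem stmt_0 (n : ℕ) (hn : 1 ≤ n) (x : ℕ) (hx : x < 2 ^ n) (y : ℕ) (hy : y < 2 ^ n) :
    (1 / Real.sqrt (2 ^ n) : ℂ) *
        Complex.exp (2 * Real.pi * Complex.I * x * y / 2 ^ n) =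
      ∏ j ∈ Finset.range n,
        (1 / Real.sqrt 2 : ℂ) *
          (if Nat.testBit y (n - 1 - j) then
            Complex.exp (2 * Real.pi * Complex.I * x / 2 ^ (j + 1)) else 1) := by
  have hsqrt : ∀ m : ℕ, Real.sqrt (2^m) = (Real.sqrt 2)^m := by
    intro m
    induction m with
    | zero => simp
    | succ m ih => rw [pow_succ, pow_succ, Real.sqrt_mul (by positivity), ih]
  rw [Finset.prod_mul_distrib, Finset.prod_const, Finset.card_range]
  have h1 : ∀ j ∈ Finset.range n,
      (if Nat.testBit y (n - 1 - j) then
        Complex.exp (2 * Real.pi * Complex.I * x / 2 ^ (j + 1)) else 1) =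
      Complex.exp (if Nat.testBit y (n - 1 - j) then
        (2 * Real.pi * Complex.I * x / 2 ^ (j + 1)) else 0) := by
    intro j _; split <;> simp
  rw [Finset.prod_congr rfl h1, ← Complex.exp_sum]
  have h2 : (∑ j ∈ Finset.range n, if Nat.testBit y (n - 1 - j) then
        (2 * Real.pi * Complex.I * x / 2 ^ (j + 1)) else 0)
      = ∑ k ∈ Finset.range n, (if y.testBit k then
        (2 * Real.pi * Complex.I * x / 2 ^ (n - k)) else 0) := by
    rw [← Finset.sum_range_reflect]
    apply Finset.sum_congr rfl
    intro j hj
    simp only [Finset.mem_range] at hj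
    have h3 : n - 1 - j + 1 = n - j := by omega
    have h3' : n - 1 - (n - 1 - j) = j := by omega
    rw [h3, h3']
  have h4 : ∀ k ∈ Finset.range n, (if y.testBit k then
        (2 * Real.pi * Complex.I * x / 2 ^ (n - k)) else 0) =
      (2 * Real.pi * Complex.I * x / 2 ^ n) * (((y.testBit k).toNat : ℂ) * 2 ^ k) := by
    intro k hk
    simp only [Finset.mem_range] at hk
    have hp : (2:ℂ) ^ (n - k) * 2 ^ k = 2 ^ n := pow_sub_mul_pow 2 hk.le
    by_cases h : y.testBit k
    · rw [if_pos h, h]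
      have hne : (2:ℂ)^(n-k) ≠ 0 := pow_ne_zero _ two_ne_zero
      have hne2 : (2:ℂ)^n ≠ 0 := pow_ne_zero _ two_ne_zero
      field_simp
      rw [← hp]; simp only [Bool.toNat_true, Nat.cast_one]; ring
    · rw [if_neg h, Bool.eq_false_iff.mpr h]
      simp
  rw [h2, Finset.sum_congr rfl h4, ← Finset.mul_sum]
  have h5 : (∑ k ∈ Finset.range n, (((y.testBit k).toNat : ℂ) * 2 ^ k)) = (y : ℂ) := by
    calc ∑ k ∈ Finset.range n, (((y.testBit k).toNat : ℂ) * 2 ^ k)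
        = ((∑ k ∈ Finset.range n, (y.testBit k).toNat * 2 ^ k : ℕ) : ℂ) := by push_cast; rfl
      _ = (y : ℂ) := by rw [sum_bits n y hy]
  rw [h5, hsqrt n]
  push_cast
  rw [div_pow, one_pow]
  ring_nf
end

section
/- The infinite product ∏_{k=2}^{∞} cos(π/2^k) is strictly greater than 0.6366. -/
open Real Filter Finset

private lemma aux_x_pos (k : ℕ) : 0 < Real.pi / 2 ^ (k + 2) := by positivity

private lemma aux_x_le (k : ℕ) : Real.pi / 2 ^ (k + 2) ≤ Real.pi / 4 := by
  apply div_le_div_of_nonneg_left Real.pi_pos.le (by norm_num)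
  calc (4:ℝ) = 2 ^ 2 := by norm_num
  _ ≤ 2 ^ (k + 2) := by
    apply pow_le_pow_right₀ (by norm_num) (by omega)

private lemma aux_cos_pos (k : ℕ) : 0 < Real.cos (Real.pi / 2 ^ (k + 2)) := by
  apply Real.cos_pos_of_mem_Ioo
  constructor
  · linarith [aux_x_pos k, Real.pi_pos]
  · linarith [aux_x_le k, Real.pi_pos]

private lemma aux_cos_ge_half (k : ℕ) : (1:ℝ)/2 ≤ Real.cos (Real.pi / 2 ^ (k + 2)) := by
  have h1 := Real.one_sub_sq_div_two_le_cos (x := Real.pi / 2 ^ (k + 2))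
  have h2 := aux_x_le k
  have h3 := aux_x_pos k
  have hpi : Real.pi ≤ 4 := by linarith [Real.pi_le_four]
  nlinarith [sq_nonneg (Real.pi / 2 ^ (k + 2))]

private lemma aux_summable_log :
    Summable fun k : ℕ => Real.log (Real.cos (Real.pi / 2 ^ (k + 2))) := by
  rw [← summable_neg_iff]
  apply Summable.of_nonneg_of_le (f := fun k : ℕ => (1/4 : ℝ) ^ k)
  · intro k
    simp only [neg_nonneg]
    apply Real.log_nonpos (aux_cos_pos k).le (Real.cos_le_one _)
  · intro k
    have hc := aux_cos_pos k
    have hch := aux_cos_ge_half k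
    have hlog : Real.log ((Real.cos (Real.pi / 2 ^ (k + 2)))⁻¹)
        ≤ (Real.cos (Real.pi / 2 ^ (k + 2)))⁻¹ - 1 :=
      Real.log_le_sub_one_of_pos (by positivity)
    rw [Real.log_inv] at hlog
    have hinv : (Real.cos (Real.pi / 2 ^ (k + 2)))⁻¹ - 1
        = (1 - Real.cos (Real.pi / 2 ^ (k + 2))) / Real.cos (Real.pi / 2 ^ (k + 2)) := by
      rw [eq_div_iff hc.ne', sub_mul, inv_mul_cancel₀ hc.ne', one_mul]
    have h1 := Real.one_sub_sq_div_two_le_cos (x := Real.pi / 2 ^ (k + 2))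
    have hb : ((2:ℝ) ^ (k + 2)) ^ 2 = 16 * 4 ^ k := by
      rw [← pow_mul, show (k + 2) * 2 = 2 * k + 4 by ring, pow_add, pow_mul]
      norm_num
      ring
    have hx2 : (Real.pi / 2 ^ (k + 2)) ^ 2 = Real.pi ^ 2 / 16 * (1/4 : ℝ) ^ k := by
      rw [div_pow, hb, div_pow, one_pow]
      have h4 : (0:ℝ) < 4 ^ k := by positivity
      field_simp
    have hpi2 : Real.pi ^ 2 / 16 ≤ 1 := by nlinarith [Real.pi_le_four, Real.pi_pos]
    have hgk : (0:ℝ) ≤ (1/4 : ℝ) ^ k := by positivity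
    calc -Real.log (Real.cos (Real.pi / 2 ^ (k + 2)))
        ≤ (1 - Real.cos (Real.pi / 2 ^ (k + 2))) / Real.cos (Real.pi / 2 ^ (k + 2)) := by
          rw [← hinv]; exact hlog
      _ ≤ ((Real.pi / 2 ^ (k + 2)) ^ 2 / 2) / (1/2) := by
          apply div_le_div₀ (by positivity) (by linarith) (by norm_num) hch
      _ = (Real.pi / 2 ^ (k + 2)) ^ 2 := by ring
      _ = Real.pi ^ 2 / 16 * (1/4 : ℝ) ^ k := hx2
      _ ≤ 1 * (1/4 : ℝ) ^ k := by nlinarith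
      _ = (1/4 : ℝ) ^ k := one_mul _
  · exact summable_geometric_of_lt_one (by norm_num) (by norm_num)

private lemma aux_identity (n : ℕ) :
    (2:ℝ) ^ n * Real.sin (Real.pi / 2 ^ (n + 1)) *
      ∏ k ∈ Finset.range n, Real.cos (Real.pi / 2 ^ (k + 2)) = 1 := by
  induction n with
  | zero => simp [Real.sin_pi_div_two]
  | succ n ih =>
    rw [Finset.prod_range_succ]
    have hdouble : Real.sin (Real.pi / 2 ^ (n + 1))
        = 2 * Real.sin (Real.pi / 2 ^ (n + 2)) * Real.cos (Real.pi / 2 ^ (n + 2)) := by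
      have : Real.pi / 2 ^ (n + 1) = 2 * (Real.pi / 2 ^ (n + 2)) := by
        rw [pow_succ]; ring
      rw [this, Real.sin_two_mul]
    calc (2:ℝ) ^ (n + 1) * Real.sin (Real.pi / 2 ^ (n + 1 + 1)) *
          ((∏ k ∈ Finset.range n, Real.cos (Real.pi / 2 ^ (k + 2))) *
            Real.cos (Real.pi / 2 ^ (n + 2)))
        = (2:ℝ) ^ n * (2 * Real.sin (Real.pi / 2 ^ (n + 2)) * Real.cos (Real.pi / 2 ^ (n + 2))) *
          ∏ k ∈ Finset.range n, Real.cos (Real.pi / 2 ^ (k + 2)) := by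
          rw [pow_succ]; ring
      _ = (2:ℝ) ^ n * Real.sin (Real.pi / 2 ^ (n + 1)) *
          ∏ k ∈ Finset.range n, Real.cos (Real.pi / 2 ^ (k + 2)) := by rw [← hdouble]
      _ = 1 := ih

private lemma aux_tendsto_T :
    Tendsto (fun n : ℕ => (2:ℝ) ^ n * Real.sin (Real.pi / 2 ^ (n + 1)))
      atTop (nhds (Real.pi / 2)) := by
  have hslope : Tendsto (fun x : ℝ => Real.sin x / x) (nhdsWithin 0 {(0:ℝ)}ᶜ) (nhds 1) := by
    have h := (Real.hasDerivAt_sin 0)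
    rw [hasDerivAt_iff_tendsto_slope] at h
    simp only [Real.cos_zero] at h
    apply h.congr'
    filter_upwards [self_mem_nhdsWithin] with x hx
    simp [slope_def_field, div_eq_iff (show x ≠ 0 from hx)]
  have ht0 : Tendsto (fun n : ℕ => Real.pi / 2 ^ (n + 1)) atTop (nhdsWithin 0 {(0:ℝ)}ᶜ) := by
    apply tendsto_nhdsWithin_of_tendsto_nhds_of_eventually_within
    · have : Tendsto (fun n : ℕ => Real.pi * (1/2 : ℝ) ^ (n + 1)) atTop (nhds (Real.pi * 0)) := by
        apply Tendsto.const_mul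
        exact (tendsto_pow_atTop_nhds_zero_of_lt_one (by norm_num) (by norm_num)).comp
          (tendsto_add_atTop_nat 1)
      simpa [div_eq_mul_inv, inv_pow] using this
    · filter_upwards with n
      have := aux_x_pos n
      simp only [Set.mem_compl_iff, Set.mem_singleton_iff]
      positivity
  have hratio : Tendsto (fun n : ℕ =>
      Real.sin (Real.pi / 2 ^ (n + 1)) / (Real.pi / 2 ^ (n + 1))) atTop (nhds 1) :=
    hslope.comp ht0
  have := hratio.const_mul (Real.pi / 2)
  rw [mul_one] at this
  apply this.congr
  intro n
  have h2 : (2:ℝ) ^ (n + 1) ≠ 0 := by positivity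
  have hpi := Real.pi_ne_zero
  field_simp
  rw [pow_succ]
  ring

private lemma aux_hasProd :
    HasProd (fun k : ℕ => Real.cos (Real.pi / 2 ^ (k + 2))) (2 / Real.pi) := by
  have hm : Multipliable fun k : ℕ => Real.cos (Real.pi / 2 ^ (k + 2)) := by
    have := Real.multipliable_of_summable_log (fun k => aux_cos_pos k) aux_summable_log
    exact this
  rw [hm.hasProd_iff_tendsto_nat]
  have hT := aux_tendsto_T
  have hTne : Real.pi / 2 ≠ 0 := by positivity
  have := hT.inv₀ hTne
  have heq : ∀ n : ℕ, ((2:ℝ) ^ n * Real.sin (Real.pi / 2 ^ (n + 1)))⁻¹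
      = ∏ k ∈ Finset.range n, Real.cos (Real.pi / 2 ^ (k + 2)) := by
    intro n
    exact (eq_inv_of_mul_eq_one_left (by rw [mul_comm]; exact aux_identity n)).symm
  have h2pi : (Real.pi / 2)⁻¹ = 2 / Real.pi := by
    rw [inv_div]
  rw [h2pi] at this
  exact this.congr heq

/-- The infinite product `∏_{k=2}^∞ cos(π/2^k)` is strictly greater than `0.6366`. -/
theorem stmt_6 : (0.6366 : ℝ) < ∏' k : ℕ, Real.cos (Real.pi / 2 ^ (k + 2)) := by
  rw [aux_hasProd.tprod_eq]
  rw [lt_div_iff₀ Real.pi_pos]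
  nlinarith [Real.pi_lt_d6]
end

section
/- Let n ≥ 1 and x ∈ {0,1,...,2^n - 1} with binary digits x_0,...,x_{n-1}. Suppose l_1,...,l_n ∈ {0,1,2,3} satisfy |l_j/4 - x/2^j|₁ < 1/4 for each j = 1,...,n, where |y|₁ denotes the distance from y to the nearest integer. Define A_0 = [[1,0],[0,1]], A_1 = [[1,1],[0,0]], A_2 = [[0,1],[1,0]], A_3 = [[0,0],[1,1]]. Then for each j = 1,...,n, the (2,1) entry of the matrix product A_{l_j} A_{l_{j-1}} ⋯ A_{l_1} equals the bit x_{j-1}. -/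
/-- Distance from a real number to the nearest integer (`| · |₁` in the paper). -/
noncomputable def intDist (y : ℝ) : ℝ := |y - round y|

/-- The matrices `A_0 = [[1,0],[0,1]]`, `A_1 = [[1,1],[0,0]]`, `A_2 = [[0,1],[1,0]]`,
`A_3 = [[0,0],[1,1]]`. -/
def Amat : Fin 4 → Matrix (Fin 2) (Fin 2) ℤ :=
  ![!![1, 0; 0, 1], !![1, 1; 0, 0], !![0, 1; 1, 0], !![0, 0; 1, 1]]

private lemma key11 (x j : ℕ) (hj : 1 ≤ j) (L : ℕ) (hL : L < 4)
    (h : intDist ((L : ℝ) / 4 - (x : ℝ) / 2 ^ j) < 1 / 4) :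
    L = (2 * (x / 2 ^ (j - 1) % 2) + (if j = 1 then 0 else x / 2 ^ (j - 2) % 2)) % 4 ∨
    L = (2 * (x / 2 ^ (j - 1) % 2) + (if j = 1 then 0 else x / 2 ^ (j - 2) % 2) + 1) % 4 := by
  obtain ⟨k, hk1⟩ : ∃ k : ℤ, |((L : ℝ) / 4 - (x : ℝ) / 2 ^ j) - k| < 1 / 4 :=
    ⟨round ((L : ℝ) / 4 - (x : ℝ) / 2 ^ j), h⟩
  have h2 : |((L : ℤ) * 2 ^ j - 4 * x - k * (4 * 2 ^ j) : ℤ)| < 2 ^ j := by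
    have e : (((L : ℤ) * 2 ^ j - 4 * x - k * (4 * 2 ^ j) : ℤ) : ℝ)
        = (4 * 2 ^ j) * (((L : ℝ) / 4 - (x : ℝ) / 2 ^ j) - k) := by
      push_cast; field_simp
    have h2' : |(((L : ℤ) * 2 ^ j - 4 * x - k * (4 * 2 ^ j) : ℤ) : ℝ)| < 2 ^ j := by
      rw [e, abs_mul, abs_of_pos (by positivity : (0:ℝ) < 4 * 2 ^ j)]
      calc 4 * 2 ^ j * |((L : ℝ) / 4 - (x : ℝ) / 2 ^ j) - (k:ℝ)| < 4 * 2 ^ j * (1/4) :=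
            mul_lt_mul_of_pos_left hk1 (by positivity)
        _ = 2 ^ j := by ring
    exact_mod_cast h2'
  obtain ⟨c, hc⟩ : ∃ c : ℤ, c = (L : ℤ) - 4 * (x / 2 ^ j : ℕ) - 4 * k := ⟨_, rfl⟩
  have hxe : (x : ℤ) = 2 ^ j * (x / 2 ^ j : ℕ) + (x % 2 ^ j : ℕ) := by
    exact_mod_cast (Nat.div_add_mod x (2 ^ j)).symm
  have h4 : |c * 2 ^ j - 4 * ((x % 2 ^ j : ℕ) : ℤ)| < 2 ^ j := by
    have e2 : c * 2 ^ j - 4 * ((x % 2 ^ j : ℕ) : ℤ)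
        = (L : ℤ) * 2 ^ j - 4 * x - k * (4 * 2 ^ j) := by
      rw [hc]; linear_combination (4 : ℤ) * hxe
    rw [e2]; exact h2
  rw [abs_lt] at h4
  rcases eq_or_lt_of_le hj with hj1 | hj2
  · -- j = 1
    subst hj1
    norm_num at h4 hc ⊢
    omega
  · -- j ≥ 2
    have hjne : ¬ (j = 1) := by omega
    rw [if_neg hjne]
    have h2p : (2 : ℕ) ^ (j - 1) = 2 * 2 ^ (j - 2) := by
      conv_lhs => rw [show j - 1 = (j - 2) + 1 from by omega]
      rw [pow_succ']
    have h4p : (2 : ℕ) ^ j = 4 * 2 ^ (j - 2) := by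
      conv_lhs => rw [show j = (j - 2) + 2 from by omega]
      rw [pow_add]; ring
    have hmm : x % 2 ^ j = x % 2 ^ (j - 1) + 2 ^ (j - 1) * (x / 2 ^ (j - 1) % 2) := by
      conv_lhs => rw [show (2:ℕ) ^ j = 2 ^ (j - 1) * 2 from by
        rw [← pow_succ]; congr 1; omega]
      exact Nat.mod_mul
    have hmm' : x % 2 ^ (j - 1) = x % 2 ^ (j - 2) + 2 ^ (j - 2) * (x / 2 ^ (j - 2) % 2) := by
      conv_lhs => rw [show (2:ℕ) ^ (j - 1) = 2 ^ (j - 2) * 2 from by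
        rw [← pow_succ]; congr 1; omega]
      exact Nat.mod_mul
    have hmN : x % 2 ^ j = 2 * 2 ^ (j - 2) * (x / 2 ^ (j - 1) % 2)
        + 2 ^ (j - 2) * (x / 2 ^ (j - 2) % 2) + x % 2 ^ (j - 2) := by
      rw [hmm, hmm', h2p]; ring
    have hmZ : ((x % 2 ^ j : ℕ) : ℤ)
        = 2 * 2 ^ (j - 2) * ((x / 2 ^ (j - 1) % 2 : ℕ) : ℤ)
          + 2 ^ (j - 2) * ((x / 2 ^ (j - 2) % 2 : ℕ) : ℤ)
          + ((x % 2 ^ (j - 2) : ℕ) : ℤ) := by exact_mod_cast hmN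
    have h4pZ : ((2:ℤ) ^ j) = 4 * 2 ^ (j - 2) := by exact_mod_cast h4p
    rw [hmZ, h4pZ] at h4
    obtain ⟨h4l, h4r⟩ := h4
    have hrZ : ((x % 2 ^ (j - 2) : ℕ) : ℤ) < 2 ^ (j - 2) := by
      exact_mod_cast Nat.mod_lt _ (by positivity)
    have hrZ0 : (0:ℤ) ≤ ((x % 2 ^ (j - 2) : ℕ) : ℤ) := Int.natCast_nonneg _
    have hpZ : (0:ℤ) < 2 ^ (j - 2) := by positivity
    have hub : c * (4 * (2:ℤ) ^ (j - 2))
        < (2 * ((x / 2 ^ (j - 1) % 2 : ℕ) : ℤ) + ((x / 2 ^ (j - 2) % 2 : ℕ) : ℤ) + 2)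
          * (4 * 2 ^ (j - 2)) := by nlinarith [h4r, hrZ]
    have hlb : (2 * ((x / 2 ^ (j - 1) % 2 : ℕ) : ℤ) + ((x / 2 ^ (j - 2) % 2 : ℕ) : ℤ) - 1)
        * (4 * 2 ^ (j - 2)) < c * (4 * (2:ℤ) ^ (j - 2)) := by nlinarith [h4l, hrZ0]
    have hub' : c < 2 * ((x / 2 ^ (j - 1) % 2 : ℕ) : ℤ) + ((x / 2 ^ (j - 2) % 2 : ℕ) : ℤ) + 2 :=
      lt_of_mul_lt_mul_right hub (by positivity)
    have hlb' : 2 * ((x / 2 ^ (j - 1) % 2 : ℕ) : ℤ) + ((x / 2 ^ (j - 2) % 2 : ℕ) : ℤ) - 1 < c :=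
      lt_of_mul_lt_mul_right hlb (by positivity)
    omega
private lemma condbit11 (x i : ℕ) : (cond (x.testBit i) 1 0 : ℕ) = x / 2 ^ i % 2 := by
  rw [Nat.testBit_eq_decide_div_mod_eq]
  rcases Nat.mod_two_eq_zero_or_one (x / 2 ^ i) with h | h <;> simp [h]

private lemma mat_step11 (v : Fin 4) (β β' : Bool)
    (hv : v.val = (2 * (cond β 1 0) + cond β' 1 0) % 4 ∨
          v.val = (2 * (cond β 1 0) + cond β' 1 0 + 1) % 4)
    (M : Matrix (Fin 2) (Fin 2) ℤ)
    (h0 : M 0 0 = cond β' 0 1) (h1 : M 1 0 = cond β' 1 0) :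
    (Amat v * M) 0 0 = cond β 0 1 ∧ (Amat v * M) 1 0 = cond β 1 0 := by
  have e0 : (Amat v * M) 0 0 = Amat v 0 0 * M 0 0 + Amat v 0 1 * M 1 0 := by
    rw [Matrix.mul_apply, Fin.sum_univ_two]
  have e1 : (Amat v * M) 1 0 = Amat v 1 0 * M 0 0 + Amat v 1 1 * M 1 0 := by
    rw [Matrix.mul_apply, Fin.sum_univ_two]
  rw [e0, e1, h0, h1]
  revert hv
  fin_cases v <;> cases β <;> cases β' <;> decide

private lemma aux11 (n x : ℕ) (l : ℕ → Fin 4)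
    (h : ∀ j, 1 ≤ j → j ≤ n →
      intDist (((l (j - 1)).val : ℝ) / 4 - (x : ℝ) / 2 ^ j) < 1 / 4) :
    ∀ j, j ≤ n →
      ((((List.range j).reverse.map fun i => Amat (l i)).prod) 0 0
        = cond (decide (0 < j) && x.testBit (j - 1)) 0 1) ∧
      ((((List.range j).reverse.map fun i => Amat (l i)).prod) 1 0
        = cond (decide (0 < j) && x.testBit (j - 1)) 1 0) := by
  intro j
  induction j with
  | zero => intro _; constructor <;> simp [Matrix.one_apply]
  | succ j ih =>
    intro hjn
    obtain ⟨ih0, ih1⟩ := ih (le_trans (Nat.le_succ j) hjn)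
    have hP : ((List.range (j+1)).reverse.map fun i => Amat (l i)).prod
        = Amat (l j) * ((List.range j).reverse.map fun i => Amat (l i)).prod := by
      rw [List.range_succ]
      simp
    have hkey := key11 x (j+1) (Nat.le_add_left 1 j) (l j).val (l j).isLt
      (by simpa using h (j+1) (Nat.le_add_left 1 j) hjn)
    have hβ : (cond (x.testBit j) 1 0 : ℕ) = x / 2 ^ (j + 1 - 1) % 2 := by
      simpa using condbit11 x j
    have hβ' : (cond (decide (0 < j) && x.testBit (j - 1)) 1 0 : ℕ)
        = (if j + 1 = 1 then 0 else x / 2 ^ (j + 1 - 2) % 2) := by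
      rcases Nat.eq_zero_or_pos j with rfl | hj0
      · simp
      · rw [if_neg (by omega)]
        rw [show j + 1 - 2 = j - 1 from by omega, ← condbit11 x (j-1)]
        simp [hj0]
    rw [← hβ, ← hβ'] at hkey
    have hmain := mat_step11 (l j) (x.testBit j)
      (decide (0 < j) && x.testBit (j - 1)) hkey _ ih0 ih1
    rw [hP]
    simpa using hmain

/-- If `l_1, …, l_n ∈ {0,1,2,3}` satisfy `|l_j/4 - x/2^j|₁ < 1/4` for all `j`, then for each
`j` the `(2,1)` entry of `A_{l_j} A_{l_{j-1}} ⋯ A_{l_1}` equals the bit `x_{j-1}` of `x`.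
(Here `l (j-1)` plays the role of `l_j`.) -/
theorem stmt_11 (n : ℕ) (hn : 1 ≤ n) (x : ℕ) (hx : x < 2 ^ n) (l : ℕ → Fin 4)
    (h : ∀ j, 1 ≤ j → j ≤ n →
      intDist (((l (j - 1)).val : ℝ) / 4 - (x : ℝ) / 2 ^ j) < 1 / 4)
    (j : ℕ) (hj1 : 1 ≤ j) (hjn : j ≤ n) :
    (((List.range j).reverse.map fun i => Amat (l i)).prod) 1 0 =
      if x.testBit (j - 1) then 1 else 0 := by
  obtain ⟨h0, h1⟩ := aux11 n x l h j hjn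
  rw [h1]
  have hj0 : 0 < j := hj1
  cases hb : x.testBit (j - 1) <;> simp [hb, hj0]
end

section
/- Let n ≥ 1 and l_1,...,l_n ∈ {0,1,2,3}. There is at most one x ∈ {0,1,...,2^n - 1} such that |l_j/4 - x/2^j|₁ < 1/4 for all j = 1,...,n. -/
lemma intDist_sub_le (a b : ℝ) : intDist (a - b) ≤ intDist a + intDist b := by
  unfold intDist
  calc |a - b - round (a - b)| ≤ |a - b - ((round a : ℤ) - round b)| := by
        exact_mod_cast round_le (a - b) (round a - round b)
    _ ≤ |a - round a| + |b - round b| := by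
        rw [show a - b - ((round a : ℝ) - round b) = (a - round a) - (b - round b) by ring]
        exact abs_sub _ _
    _ = _ := rfl

lemma intDist_odd_half (t : ℤ) (ht : Odd t) : intDist ((t : ℝ) / 2) = 1 / 2 := by
  obtain ⟨k, hk⟩ := ht
  subst hk
  have h1 : ((2 * k + 1 : ℤ) : ℝ) / 2 = (k : ℝ) + 1 / 2 := by push_cast; ring
  rw [intDist, h1]
  have : round ((k : ℝ) + 1 / 2) = k + 1 := by
    rw [round_eq, show (k : ℝ) + 1 / 2 + 1 / 2 = ((k + 1 : ℤ) : ℝ) by push_cast; ring,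
      Int.floor_intCast]
  rw [this]
  push_cast
  rw [show (k : ℝ) + 1 / 2 - (k + 1) = -(1/2) by ring, abs_neg, abs_of_pos] <;> norm_num

/-- Given `l_1, …, l_n ∈ {0,1,2,3}`, there is at most one `x ∈ {0,…,2^n - 1}` with
`|l_j/4 - x/2^j|₁ < 1/4` for all `j = 1, …, n`. (Here `l (j-1)` plays the role of `l_j`.) -/
theorem stmt_12 (n : ℕ) (hn : 1 ≤ n) (l : ℕ → Fin 4)
    (x x' : ℕ) (hx : x < 2 ^ n) (hx' : x' < 2 ^ n)
    (h : ∀ j, 1 ≤ j → j ≤ n →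
      intDist (((l (j - 1)).val : ℝ) / 4 - (x : ℝ) / 2 ^ j) < 1 / 4)
    (h' : ∀ j, 1 ≤ j → j ≤ n →
      intDist (((l (j - 1)).val : ℝ) / 4 - (x' : ℝ) / 2 ^ j) < 1 / 4) :
    x = x' := by
  set d : ℤ := (x : ℤ) - x' with hd
  have key : ∀ j ≤ n, (2 : ℤ) ^ j ∣ d := by
    intro j hj
    induction j with
    | zero => simp
    | succ k ih =>
      have hdvd := ih (le_of_lt (Nat.lt_of_succ_le hj))
      obtain ⟨t, ht⟩ := hdvd
      by_contra hnd
      have hodd : Odd t := by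
        rcases Int.even_or_odd t with he | ho
        · obtain ⟨s, hs⟩ := he
          exact absurd ⟨s, by rw [ht, hs]; ring⟩ hnd
        · exact ho
      -- intDist (d / 2^(k+1)) < 1/2 but equals 1/2
      have h1 := h (k+1) (Nat.succ_le_succ (Nat.zero_le k)) hj
      have h2 := h' (k+1) (Nat.succ_le_succ (Nat.zero_le k)) hj
      have hcalc : ((l (k+1-1)).val : ℝ) / 4 - (x' : ℝ) / 2 ^ (k+1)
          - (((l (k+1-1)).val : ℝ) / 4 - (x : ℝ) / 2 ^ (k+1)) = (t : ℝ) / 2 := by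
        have : (d : ℝ) = (x : ℝ) - x' := by rw [hd]; push_cast; ring
        have ht' : ((x : ℝ) - x') = 2 ^ k * t := by
          rw [← this]; exact_mod_cast congrArg (Int.cast : ℤ → ℝ) ht
        field_simp
        linear_combination 8 * ht'
      have hle := intDist_sub_le (((l (k+1-1)).val : ℝ) / 4 - (x' : ℝ) / 2 ^ (k+1))
        (((l (k+1-1)).val : ℝ) / 4 - (x : ℝ) / 2 ^ (k+1))
      rw [hcalc, intDist_odd_half t hodd] at hle
      linarith
  have hdvd := key n le_rfl
  have habs : |d| < 2 ^ n := by
    rw [hd]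
    rw [abs_sub_lt_iff]
    constructor <;> push_cast <;> [linarith [hx, (Nat.cast_nonneg x' : (0:ℤ) ≤ x')];
      linarith [hx', (Nat.cast_nonneg x : (0:ℤ) ≤ x)]]
  have : d = 0 := by
    rcases hdvd with ⟨c, hc⟩
    have : c = 0 := by
      by_contra hc0
      have : (2:ℤ)^n ≤ |d| := by
        rw [hc, abs_mul, abs_pow]
        calc (2:ℤ)^n = 2^n * 1 := by ring
          _ ≤ |2|^n * |c| := by
            apply mul_le_mul
            · simp
            · exact Int.one_le_abs hc0
            · norm_num
            · positivity
      linarith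
    simp [hc, this]
  omega
end

section
/- (Mixed-radix factorization of the QFT.) Let m = m_1 m_2 ⋯ m_k with the m_j pairwise coprime. For each j set f_j = m/m_j and let g_j ∈ {0,...,m_j - 1} satisfy g_j f_j ≡ 1 (mod m_j). Let C : ℂ^m → ℂ^{m_1} ⊗ ⋯ ⊗ ℂ^{m_k} be the unitary mapping |x⟩ ↦ |x mod m_1⟩ ⊗ ⋯ ⊗ |x mod m_k⟩ (a bijection on basis states by CRT), and let A be the unitary acting on basis states by |x_1,...,x_k⟩ ↦ |g_1 x_1 mod m_1, ..., g_k x_k mod m_k⟩. Then F_m = C† (F_{m_1} ⊗ ⋯ ⊗ F_{m_k}) A C, where F_m denotes the QFT modulo m with matrix entries (1/√m) e^{2πi xy/m}. -/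
open Finset

lemma sqrt_prod_nat {k : ℕ} (m : Fin k → ℕ) :
    Real.sqrt (∏ j, (m j : ℝ)) = ∏ j, Real.sqrt (m j) := by
  induction (univ : Finset (Fin k)) using Finset.cons_induction with
  | empty => simp
  | cons a s ha ih =>
    rw [Finset.prod_cons, Finset.prod_cons, Real.sqrt_mul (by positivity), ih]

lemma key_dvd (k : ℕ) (m : Fin k → ℕ) [∀ j, NeZero (m j)] (M : ℕ) [NeZero M]
    (hM : M = ∏ j, m j)
    (hcop : ∀ i j, i ≠ j → Nat.Coprime (m i) (m j))
    (g : Fin k → ℕ)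
    (hg : ∀ j, (g j * (M / m j)) % m j = 1 % m j) (a b : ℕ) :
    (M:ℤ) ∣ (↑(∑ j, (M / m j) * ((a % m j) * ((g j * b) % m j))) : ℤ) - a * b := by
  have hmne : ∀ j, m j ≠ 0 := fun j => NeZero.ne _
  have hdvd2 : ∀ i j, i ≠ j → m i ∣ M / m j := by
    intro i j hij
    have hMe : M = m j * ∏ l ∈ univ.erase j, m l := by
      rw [hM, Finset.mul_prod_erase _ _ (mem_univ j)]
    rw [hMe, Nat.mul_div_cancel_left _ (Nat.pos_of_ne_zero (hmne j))]
    exact Finset.dvd_prod_of_mem _ (Finset.mem_erase.mpr ⟨hij, mem_univ i⟩)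
  have hMcast : (M:ℤ) = ∏ j, (m j : ℤ) := by rw [hM]; push_cast; rfl
  rw [hMcast]
  apply Finset.prod_dvd_of_coprime
  · intro i _ j _ hij
    exact Nat.isCoprime_iff_coprime.mpr (hcop i j hij)
  · intro i _
    rw [← ZMod.intCast_zmod_eq_zero_iff_dvd]
    have hT : (↑(∑ j, (M / m j) * ((a % m j) * ((g j * b) % m j))) : ZMod (m i))
        = ((g i * (M / m i) : ℕ) : ZMod (m i)) * (a * b) := by
      push_cast
      rw [Finset.sum_eq_single i]
      · push_cast [ZMod.natCast_mod]
        ring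
      · intro j _ hji
        have : ((M / m j : ℕ) : ZMod (m i)) = 0 :=
          by rw [ZMod.natCast_eq_zero_iff]; exact hdvd2 i j (Ne.symm hji)
        rw [this, zero_mul]
      · simp
    have hgi : ((g i * (M / m i) : ℕ) : ZMod (m i)) = 1 := by
      have := congrArg (Nat.cast : ℕ → ZMod (m i)) (hg i)
      rwa [ZMod.natCast_mod, ZMod.natCast_mod, Nat.cast_one] at this
    rw [Int.cast_sub, Int.cast_mul, Int.cast_natCast, Int.cast_natCast, Int.cast_natCast,
      hT, hgi, one_mul, sub_self]

/-- Mixed-radix factorization of the QFT: for `M = m_1 ⋯ m_k` with the `m_j` pairwise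
coprime, `f_j = M/m_j` and `g_j f_j ≡ 1 (mod m_j)`, we have
`F_M = C† (F_{m_1} ⊗ ⋯ ⊗ F_{m_k}) A C`, where `C |x⟩ = |x mod m_1, …, x mod m_k⟩` and
`A |x_1, …, x_k⟩ = |g_1 x_1, …, g_k x_k⟩`. -/
theorem stmt_17 (k : ℕ) (m : Fin k → ℕ) [∀ j, NeZero (m j)] (M : ℕ) [NeZero M]
    (hM : M = ∏ j, m j)
    (hcop : ∀ i j, i ≠ j → Nat.Coprime (m i) (m j))
    (g : Fin k → ℕ) (hglt : ∀ j, g j < m j)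
    (hg : ∀ j, (g j * (M / m j)) % m j = 1 % m j) :
    (Matrix.of fun x y : ZMod M =>
        (1 / Real.sqrt M : ℂ) * Complex.exp (2 * Real.pi * Complex.I * x.val * y.val / M)) =
      (Matrix.conjTranspose (Matrix.of fun (v : ∀ j, ZMod (m j)) (x : ZMod M) =>
          if (fun j => ((x.val : ZMod (m j)))) = v then (1 : ℂ) else 0)) *
        (Matrix.of fun u v : ∀ j, ZMod (m j) =>
          ∏ j, (1 / Real.sqrt (m j) : ℂ) *
            Complex.exp (2 * Real.pi * Complex.I * (u j).val * (v j).val / (m j))) *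
        (Matrix.of fun u v : ∀ j, ZMod (m j) =>
          if u = fun j => (g j : ZMod (m j)) * v j then (1 : ℂ) else 0) *
        (Matrix.of fun (v : ∀ j, ZMod (m j)) (x : ZMod M) =>
          if (fun j => ((x.val : ZMod (m j)))) = v then (1 : ℂ) else 0) := by
  have hmdvd : ∀ j, m j ∣ M := fun j => hM ▸ Finset.dvd_prod_of_mem _ (mem_univ j)
  have hMne : (M:ℂ) ≠ 0 := Nat.cast_ne_zero.mpr (NeZero.ne M)
  ext x y
  simp only [Matrix.mul_apply, Matrix.conjTranspose_apply, Matrix.of_apply,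
    apply_ite (star : ℂ → ℂ), star_one,
    star_zero, ite_mul, mul_ite, one_mul, zero_mul, mul_one, mul_zero, Finset.sum_ite_eq,
    Finset.sum_ite_eq', Finset.mem_univ, if_true]
  set a := x.val with ha
  set b := y.val with hb
  -- rewrite the ZMod vals
  have hv1 : ∀ j, ((a : ZMod (m j))).val = a % m j := fun j => ZMod.val_natCast _ _
  have hv2 : ∀ j, ((g j : ZMod (m j)) * (b : ZMod (m j))).val = (g j * b) % m j := by
    intro j; rw [← Nat.cast_mul, ZMod.val_natCast]
  simp only [hv1, hv2]
  rw [Finset.prod_mul_distrib]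
  have hnorm : (1 / (Real.sqrt M : ℂ)) = ∏ j, (1 / (Real.sqrt (m j) : ℂ)) := by
    have hs : Real.sqrt M = ∏ j, Real.sqrt (m j) := by
      rw [hM, Nat.cast_prod]; exact sqrt_prod_nat m
    rw [hs, Complex.ofReal_prod, Finset.prod_div_distrib, Finset.prod_const_one]
  rw [← hnorm]
  congr 1
  -- exponential part
  set T : ℕ := ∑ j, (M / m j) * ((a % m j) * ((g j * b) % m j)) with hT
  have key : (M:ℤ) ∣ (T:ℤ) - a * b := key_dvd k m M hM hcop g hg a b
  set n : ℤ := ((T:ℤ) - a * b) / M with hn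
  have hnM : (n:ℂ) * M = (T:ℂ) - a * b := by
    have h := Int.ediv_mul_cancel key
    have h2 := congrArg (fun z : ℤ => (z:ℂ)) h
    push_cast at h2
    exact h2
  have hterm : ∀ j, (2 * (Real.pi:ℂ) * Complex.I * ((a % m j : ℕ):ℂ) * ((g j * b % m j : ℕ):ℂ) / (m j : ℂ))
      = 2 * (Real.pi:ℂ) * Complex.I * (((M / m j) * ((a % m j) * ((g j * b) % m j)) : ℕ):ℂ) / M := by
    intro j
    have hmj : ((m j : ℕ):ℂ) ≠ 0 := Nat.cast_ne_zero.mpr (NeZero.ne _)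
    have hfm : ((M / m j : ℕ):ℂ) * (m j : ℂ) = M := by
      exact_mod_cast congrArg (Nat.cast : ℕ → ℂ) (Nat.div_mul_cancel (hmdvd j))
    rw [div_eq_div_iff hmj hMne, ← hfm]
    push_cast
    ring
  have hsum : (∑ j, 2 * (Real.pi:ℂ) * Complex.I * ((a % m j : ℕ):ℂ) * ((g j * b % m j : ℕ):ℂ) / (m j : ℂ))
      = 2 * (Real.pi:ℂ) * Complex.I * a * b / M + n * (2 * (Real.pi:ℂ) * Complex.I) := by
    calc (∑ j, 2 * (Real.pi:ℂ) * Complex.I * ((a % m j : ℕ):ℂ) * ((g j * b % m j : ℕ):ℂ) / (m j : ℂ))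
        = ∑ j, 2 * (Real.pi:ℂ) * Complex.I * (((M / m j) * ((a % m j) * ((g j * b) % m j)) : ℕ):ℂ) / M := by
          exact Finset.sum_congr rfl fun j _ => hterm j
      _ = 2 * (Real.pi:ℂ) * Complex.I * (T:ℂ) / M := by
          rw [← Finset.sum_div, ← Finset.mul_sum, hT]; push_cast; ring
      _ = 2 * (Real.pi:ℂ) * Complex.I * a * b / M + n * (2 * (Real.pi:ℂ) * Complex.I) := by
          have hTc : (T:ℂ) = a * b + n * M := by linear_combination -hnM
          rw [hTc]
          field_simp
  rw [← Complex.exp_sum, hsum, Complex.exp_add, Complex.exp_int_mul_two_pi_mul_I, mul_one]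
end
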